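/- arXiv:2309.11974 — 2 statements merged into one kernel-verified Lean document; each statement's English description precedes it below -/
import Mathlib

section
/- Let L be a field extension of ℚ with [L : ℚ] = 2 and τ ∈ L with τ ∉ ℚ, and let a, b, c, d ∈ ℚ with ad − bc = 1. Then the following are equivalent: (i) cτ + d ≠ 0 and (aτ + b)/(cτ + d) = τ; (ii) aτ + b = (cτ + d)τ. Moreover, in that case the field norm N_{L/ℚ}(cτ + d) equals 1. -/
/-!
Since `τ ∉ ℚ`, the pair `1, τ` is a `ℚ`-basis of `L`. Hence `cτ + d = 0` would force
`c = d = 0`, contradicting `ad - bc = 1`, so the fixed-point equation can be cleared of its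
denominator. In the basis `1, τ`, multiplication by `cτ + d` sends `1 ↦ d + cτ` and, by the
fixed-point equation, `τ ↦ b + aτ`; its matrix is `(d b; c a)`, whose determinant is `1`.
-/

theorem linearIndependent_pair_one_iff_notMem_range {K L : Type*} [Field K] [Ring L] [Nontrivial L]
    [Algebra K L] {τ : L} :
    LinearIndependent K ![1, τ] ↔ τ ∉ (algebraMap K L).range := by
  simp [LinearIndependent.pair_iff' one_ne_zero, Algebra.algebraMap_eq_smul_one]

theorem eq_zero_of_algebraMap_mul_add_eq_zero {K L : Type*} [CommRing K] [Ring L]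
    [Algebra K L] {τ : L} (hτ : LinearIndependent K ![1, τ]) {c d : K}
    (h : algebraMap K L c * τ + algebraMap K L d = 0) : c = 0 ∧ d = 0 :=
  (LinearIndependent.pair_iff.mp hτ d c (by
    rw [Algebra.smul_def, Algebra.smul_def, mul_one, add_comm, h])).symm

theorem Algebra.norm_eq_of_mul_basis_fin_two {K L : Type*} [CommRing K] [Ring L] [Algebra K L]
    (B : Module.Basis (Fin 2) K L) {x : L} {p q r s : K}
    (h₀ : x * B 0 = p • B 0 + q • B 1) (h₁ : x * B 1 = r • B 0 + s • B 1) :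
    Algebra.norm K x = p * s - r * q := by
  rw [Algebra.norm_eq_matrix_det B, Matrix.det_fin_two]
  simp [Algebra.leftMulMatrix_eq_repr_mul, h₀, h₁]

theorem Algebra.norm_algebraMap_mul_add_of_mul_eq {K L : Type*} [Field K] [CommRing L]
    [Algebra K L] (hdim : Module.finrank K L = 2) {τ : L} (hτ : LinearIndependent K ![1, τ])
    {a b c d : K}
    (h : algebraMap K L a * τ + algebraMap K L b =
      (algebraMap K L c * τ + algebraMap K L d) * τ) :
    Algebra.norm K (algebraMap K L c * τ + algebraMap K L d) = a * d - b * c := by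
  let B := basisOfLinearIndependentOfCardEqFinrank hτ (by simp [hdim])
  have hB₀ : B 0 = 1 := by simp [B]
  have hB₁ : B 1 = τ := by simp [B]
  rw [Algebra.norm_eq_of_mul_basis_fin_two B (p := d) (q := c) (r := b) (s := a)]
  · ring
  · rw [hB₀, hB₁, Algebra.smul_def, Algebra.smul_def]; ring
  · rw [hB₀, hB₁, Algebra.smul_def, Algebra.smul_def, ← h]; ring

/-- Let `L/ℚ` be a quadratic field extension, `τ ∈ L ∖ ℚ`, and
`a, b, c, d ∈ ℚ` with `ad − bc = 1`.  Then `cτ + d ≠ 0` together with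
`(aτ + b)/(cτ + d) = τ` is equivalent to `aτ + b = (cτ + d)τ`, and in that case
the field norm of `cτ + d` equals `1`. -/
theorem stmt_8 (L : Type*) [Field L] [Algebra ℚ L]
    (hdim : Module.finrank ℚ L = 2)
    (τ : L) (hτ : τ ∉ (algebraMap ℚ L).range)
    (a b c d : ℚ) (hdet : a * d - b * c = 1) :
    ((algebraMap ℚ L c * τ + algebraMap ℚ L d ≠ 0 ∧
        (algebraMap ℚ L a * τ + algebraMap ℚ L b) /
          (algebraMap ℚ L c * τ + algebraMap ℚ L d) = τ) ↔
      algebraMap ℚ L a * τ + algebraMap ℚ L b =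
        (algebraMap ℚ L c * τ + algebraMap ℚ L d) * τ) ∧
    (algebraMap ℚ L a * τ + algebraMap ℚ L b =
        (algebraMap ℚ L c * τ + algebraMap ℚ L d) * τ →
      Algebra.norm ℚ (algebraMap ℚ L c * τ + algebraMap ℚ L d) = 1) := by
  have hli := linearIndependent_pair_one_iff_notMem_range.mpr hτ
  have hne : algebraMap ℚ L c * τ + algebraMap ℚ L d ≠ 0 := fun h => by
    obtain ⟨rfl, rfl⟩ := eq_zero_of_algebraMap_mul_add_eq_zero hli h
    simp at hdet
  refine ⟨⟨fun ⟨_, h⟩ => ?_, fun h => ⟨hne, ?_⟩⟩, fun h => ?_⟩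
  · rwa [div_eq_iff hne, mul_comm τ] at h
  · rwa [div_eq_iff hne, mul_comm τ]
  · rw [Algebra.norm_algebraMap_mul_add_of_mul_eq hdim hli h, hdet]
end

section
/- Let A, B, C be integers with A ≠ 0, and suppose D := B² − 4AC > 0 is not a perfect square. Let L be a field of characteristic zero and τ ∈ L with Aτ² + Bτ + C = 0. Then there exist integers a, b, c, d with ad − bc = 1 and c ≠ 0 such that aτ + b = (cτ + d)τ. In particular, the stabiliser of τ in SL₂(ℤ) under the Möbius action contains an element other than ±identity (an automorph of τ). -/
/-- Let `A, B, C` be integers with `A ≠ 0` and `D = B² − 4AC > 0` not a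
perfect square, and let `τ` be a root of `AX² + BX + C` in a field `L` of
characteristic zero.  Then there is an integer matrix `(a b; c d)` of
determinant `1` with `c ≠ 0` fixing `τ`: `aτ + b = (cτ + d)τ` (an automorph of
`τ`). -/
theorem stmt_16 (A B C : ℤ) (hA : A ≠ 0)
    (hD : 0 < B ^ 2 - 4 * A * C) (hsq : ¬IsSquare (B ^ 2 - 4 * A * C))
    (L : Type*) [Field L] [CharZero L] (τ : L)
    (hτ : (A : L) * τ ^ 2 + (B : L) * τ + (C : L) = 0) :
    ∃ a b c d : ℤ, a * d - b * c = 1 ∧ c ≠ 0 ∧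
      (a : L) * τ + (b : L) = ((c : L) * τ + (d : L)) * τ := by
  obtain ⟨x, y, hp, hy⟩ := Pell.exists_of_not_isSquare hD hsq
  refine ⟨x - B * y, -(2 * C * y), 2 * A * y, x + B * y, by nlinarith [hp], by
    simp [hA, hy, mul_eq_zero], ?_⟩
  push_cast
  linear_combination (-(2 * (y : L))) * hτ
end
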